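/- arXiv:1208.6265 — 2 statements merged into one kernel-verified Lean document; each statement's English description precedes it below -/
import Mathlib

section
/- The quantum interchange law holds: for every Σ_i x_i ⊗ y_i ∈ H1□H1 and every u, v ∈ H1 (with products taken in the smash product H1), Σ_i (x_i u)∘(y_i v) = Σ_i (x_i ∘ y_i)(u ∘ v). (Part of Theorem 2.6.) -/
open TensorProduct

noncomputable section

variable (k A H : Type*) [Field k] [Ring A] [Ring H]
  [HopfAlgebra k A] [HopfAlgebra k H]

/-- `t(a⊗h) = d(a)h`. -/
def tmap (d : A →ₗ[k] H) : A ⊗[k] H →ₗ[k] H :=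
  LinearMap.mul' k H ∘ₗ map d LinearMap.id

/-- `s(a⊗h) = ε(a)h`. -/
def smap : A ⊗[k] H →ₗ[k] H :=
  (TensorProduct.lid k H).toLinearMap ∘ₗ map (Coalgebra.counit : A →ₗ[k] k) LinearMap.id

/-- `i(h) = 1⊗h`. -/
def imap : H →ₗ[k] A ⊗[k] H := TensorProduct.mk k A H 1

/-- The tensor-product coproduct `Δ(a⊗h) = (a₁⊗h₁) ⊗ (a₂⊗h₂)` on `H1 = A ⊗ H`. -/
def comul1 : A ⊗[k] H →ₗ[k] (A ⊗[k] H) ⊗[k] (A ⊗[k] H) :=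
  (tensorTensorTensorComm k A A H H).toLinearMap ∘ₗ
    map (Coalgebra.comul : A →ₗ[k] A ⊗[k] A) (Coalgebra.comul : H →ₗ[k] H ⊗[k] H)

/-- The tensor-product counit `ε(a⊗h) = ε(a)ε(h)` on `H1 = A ⊗ H`. -/
def counit1 : A ⊗[k] H →ₗ[k] k :=
  (TensorProduct.lid k k).toLinearMap ∘ₗ
    map (Coalgebra.counit : A →ₗ[k] k) (Coalgebra.counit : H →ₗ[k] k)

/-- The left coaction `DL = (t⊗id)Δ`. -/
def DLmap (d : A →ₗ[k] H) : A ⊗[k] H →ₗ[k] H ⊗[k] (A ⊗[k] H) :=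
  map (tmap k A H d) LinearMap.id ∘ₗ comul1 k A H

/-- The right coaction `DR = (id⊗s)Δ`. -/
def DRmap : A ⊗[k] H →ₗ[k] (A ⊗[k] H) ⊗[k] H :=
  map LinearMap.id (smap k A H) ∘ₗ comul1 k A H

/-- The second product `(a⊗h)∘(b⊗g) = ε(h) ab ⊗ g`. -/
def circ : (A ⊗[k] H) ⊗[k] (A ⊗[k] H) →ₗ[k] A ⊗[k] H :=
  map (LinearMap.mul' k A)
      ((TensorProduct.lid k H).toLinearMap ∘ₗ map (Coalgebra.counit : H →ₗ[k] k) LinearMap.id)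
    ∘ₗ (tensorTensorTensorComm k A H A H).toLinearMap

/-- The quantum groupoid antipode `𝒮(a⊗h) = S(a₁) ⊗ d(a₂)h`. -/
def SS (d : A →ₗ[k] H) : A ⊗[k] H →ₗ[k] A ⊗[k] H :=
  map (HopfAlgebra.antipode (R := k) : A →ₗ[k] A) (tmap k A H d)
    ∘ₗ (TensorProduct.assoc k A A H).toLinearMap
    ∘ₗ map (Coalgebra.comul : A →ₗ[k] A ⊗[k] A) LinearMap.id

/-- The smash product multiplication `(a⊗h)(b⊗g) = a(h₁▷b) ⊗ h₂g`. -/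
def smashMul (act : H ⊗[k] A →ₗ[k] A) :
    (A ⊗[k] H) ⊗[k] (A ⊗[k] H) →ₗ[k] A ⊗[k] H :=
  map (LinearMap.mul' k A) LinearMap.id
  ∘ₗ (TensorProduct.assoc k A A H).symm.toLinearMap
  ∘ₗ map LinearMap.id
      (map act (LinearMap.mul' k H)
        ∘ₗ (tensorTensorTensorComm k H H A H).toLinearMap)
  ∘ₗ (TensorProduct.assoc k A (H ⊗[k] H) (A ⊗[k] H)).toLinearMap
  ∘ₗ map (map LinearMap.id (Coalgebra.comul : H →ₗ[k] H ⊗[k] H)) LinearMap.id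

/-- The cotensor product `H1□H1`. -/
def cot (d : A →ₗ[k] H) : Set ((A ⊗[k] H) ⊗[k] (A ⊗[k] H)) :=
  {x | (TensorProduct.assoc k (A ⊗[k] H) H (A ⊗[k] H)).toLinearMap
        (map (DRmap k A H) LinearMap.id x) = map LinearMap.id (DLmap k A H d) x}

/-- A Hopf (algebra) crossed module. -/
structure HopfCrossedModule (act : H ⊗[k] A →ₗ[k] A) (d : A →ₗ[k] H) : Prop where
  /-- `(hg)▷a = h▷(g▷a)` -/
  act_mul : ∀ (h g : H) (a : A), act ((h * g) ⊗ₜ[k] a) = act (h ⊗ₜ[k] act (g ⊗ₜ[k] a))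
  /-- `1▷a = a` -/
  act_one : ∀ a : A, act ((1 : H) ⊗ₜ[k] a) = a
  /-- `h▷(ab) = (h₁▷a)(h₂▷b)` -/
  act_mul_alg : act ∘ₗ map LinearMap.id (LinearMap.mul' k A)
      = LinearMap.mul' k A ∘ₗ map act act
          ∘ₗ (tensorTensorTensorComm k H H A A).toLinearMap
          ∘ₗ map (Coalgebra.comul : H →ₗ[k] H ⊗[k] H) LinearMap.id
  /-- `h▷1 = ε(h)1` -/
  act_unit : ∀ h : H, act (h ⊗ₜ[k] (1 : A)) = (Coalgebra.counit h : k) • (1 : A)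
  /-- `Δ(h▷a) = (h₁▷a₁)⊗(h₂▷a₂)` -/
  act_comul : (Coalgebra.comul : A →ₗ[k] A ⊗[k] A) ∘ₗ act
      = map act act ∘ₗ (tensorTensorTensorComm k H H A A).toLinearMap
          ∘ₗ map (Coalgebra.comul : H →ₗ[k] H ⊗[k] H) (Coalgebra.comul : A →ₗ[k] A ⊗[k] A)
  /-- `ε(h▷a) = ε(h)ε(a)` -/
  act_counit : ∀ (h : H) (a : A),
      (Coalgebra.counit (act (h ⊗ₜ[k] a)) : k) = Coalgebra.counit h * Coalgebra.counit a
  /-- `h₁ ⊗ (h₂▷a) = h₂ ⊗ (h₁▷a)` -/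
  act_cocomm : map LinearMap.id act ∘ₗ (TensorProduct.assoc k H H A).toLinearMap
        ∘ₗ map (Coalgebra.comul : H →ₗ[k] H ⊗[k] H) LinearMap.id
      = map LinearMap.id act ∘ₗ (TensorProduct.assoc k H H A).toLinearMap
        ∘ₗ map ((TensorProduct.comm k H H).toLinearMap
              ∘ₗ (Coalgebra.comul : H →ₗ[k] H ⊗[k] H)) LinearMap.id
  /-- `d` is multiplicative -/
  d_mul : ∀ a b : A, d (a * b) = d a * d b
  /-- `d(1) = 1` -/
  d_one : d 1 = 1
  /-- `d` is comultiplicative -/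
  d_comul : (Coalgebra.comul : H →ₗ[k] H ⊗[k] H) ∘ₗ d
      = map d d ∘ₗ (Coalgebra.comul : A →ₗ[k] A ⊗[k] A)
  /-- `ε∘d = ε` -/
  d_counit : (Coalgebra.counit : H →ₗ[k] k) ∘ₗ d = (Coalgebra.counit : A →ₗ[k] k)
  /-- `d(h▷a) = h₁ d(a) S(h₂)` -/
  d_act : d ∘ₗ act = LinearMap.mul' k H
      ∘ₗ map LinearMap.id (LinearMap.mul' k H
            ∘ₗ map LinearMap.id (HopfAlgebra.antipode (R := k) : H →ₗ[k] H)
            ∘ₗ (TensorProduct.comm k H H).toLinearMap)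
      ∘ₗ (TensorProduct.assoc k H H H).toLinearMap
      ∘ₗ map (Coalgebra.comul : H →ₗ[k] H ⊗[k] H) d
  /-- `d(a)▷b = a₁ b S(a₂)` -/
  crossed : act ∘ₗ map d LinearMap.id = LinearMap.mul' k A
      ∘ₗ map LinearMap.id (LinearMap.mul' k A
            ∘ₗ map LinearMap.id (HopfAlgebra.antipode (R := k) : A →ₗ[k] A)
            ∘ₗ (TensorProduct.comm k A A).toLinearMap)
      ∘ₗ (TensorProduct.assoc k A A A).toLinearMap
      ∘ₗ map (Coalgebra.comul : A →ₗ[k] A ⊗[k] A) LinearMap.id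


/-- Right multiplication by `u` in the smash product `H1 = A⋊H`. -/
def rmul (act : H ⊗[k] A →ₗ[k] A) (u : A ⊗[k] H) : A ⊗[k] H →ₗ[k] A ⊗[k] H :=
  smashMul k A H act ∘ₗ (TensorProduct.mk k (A ⊗[k] H) (A ⊗[k] H)).flip u

/-!
Write `π (a ⊗ h) = ε(h) a`, so that `p ∘ w` is `w` with its `A`-leg multiplied on the left by `π p`.
Since `(π ⊗ id) ∘ DR = id`, the left-hand side is `Φ ((DR ⊗ id) x)` for
`Φ (p ⊗ κ ⊗ w) = ((π p ⊗ κ) u) ∘ (w v)`, and the cotensor condition turns it into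
`Φ ((id ⊗ DL) x)`. For `x = (a ⊗ h) ⊗ (b ⊗ g)` this is
`ε(h) Σ (a (d(b₍₁₎) g₍₁₎ ▷ π u) b₍₂₎ ⊗ g₍₂₎) v`. The crossed-module axiom
`d(b) ▷ z = b₍₁₎ z S(b₍₂₎)` gives `Σ (d(b₍₁₎) ▷ z) b₍₂₎ = b z`, which turns this into
`ε(h) ((a b ⊗ g) (π u ⊗ 1)) v`, and associativity of the smash product against `π u ⊗ 1` finishes
the proof.
-/

open Coalgebra

lemma Coalgebra.sum_counit_right_smul {R C : Type*} [CommSemiring R] [AddCommMonoid C]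
    [Module R C] [Coalgebra R C] {c : C} {ι : Type*} (𝓡 : Repr R c ι) :
    ∑ i ∈ 𝓡.index, counit (R := R) (𝓡.right i) • 𝓡.left i = c := by
  simpa only [map_sum, TensorProduct.lift.tmul, LinearMap.flip_apply, LinearMap.lsmul_apply,
    one_smul] using congr(TensorProduct.lift (LinearMap.lsmul R C).flip $(sum_tmul_counit_eq 𝓡))

section

variable {k A H : Type*} [Field k] [Ring A] [Ring H] [HopfAlgebra k A] [HopfAlgebra k H]
  (act : H ⊗[k] A →ₗ[k] A)

def projA : A ⊗[k] H →ₗ[k] A :=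
  (TensorProduct.rid k A).toLinearMap ∘ₗ (counit : H →ₗ[k] k).lTensor A

@[simp]
lemma projA_tmul (a : A) (h : H) : projA (a ⊗ₜ[k] h) = counit (R := k) h • a := by
  simp [projA]

lemma circ_tmul (p w : A ⊗[k] H) :
    circ k A H (p ⊗ₜ w) = (LinearMap.mulLeft k (projA p)).rTensor H w := by
  induction w using TensorProduct.induction_on with
  | zero => simp
  | add w w' hw hw' => simp only [tmul_add, map_add, hw, hw']
  | tmul b g =>
    induction p using TensorProduct.induction_on with
    | zero => simp
    | add p p' hp hp' =>
      simp only [add_tmul, map_add, hp, hp', LinearMap.rTensor_tmul, LinearMap.mulLeft_apply,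
        add_mul]
    | tmul a h => simp [circ, smul_tmul']

lemma smashMul_tmul_tmul (a b : A) {h : H} (g : H) {ι : Type*} (𝓡 : Repr k h ι) :
    smashMul k A H act ((a ⊗ₜ h) ⊗ₜ (b ⊗ₜ g))
      = ∑ i ∈ 𝓡.index, (a * act (𝓡.left i ⊗ₜ b)) ⊗ₜ (𝓡.right i * g) := by
  simp [smashMul, ← 𝓡.eq, tmul_sum, sum_tmul, tensorTensorTensorComm_tmul]

lemma projA_smashMul_tmul (a : A) (h : H) (u : A ⊗[k] H) :
    projA (smashMul k A H act ((a ⊗ₜ h) ⊗ₜ u)) = a * act (h ⊗ₜ projA u) := by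
  induction u using TensorProduct.induction_on with
  | zero => simp
  | add u u' hu hu' => simp only [tmul_add, map_add, hu, hu', mul_add]
  | tmul b g =>
    conv_rhs => rw [← sum_counit_right_smul (ℛ k h)]
    simp only [smashMul_tmul_tmul act a b g (ℛ k h), map_sum, projA_tmul, sum_tmul,
      Bialgebra.counit_mul]
    simp only [Finset.mul_sum, ← smul_tmul', tmul_smul, map_smul, mul_smul_comm, smul_smul,
      mul_comm]

lemma projA_rTensor_comp_DRmap : projA.rTensor H ∘ₗ DRmap k A H = LinearMap.id := by
  refine TensorProduct.ext' fun a h => ?_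
  conv_rhs => rw [LinearMap.id_apply, ← sum_counit_right_smul (ℛ k a), ← sum_counit_smul (ℛ k h)]
  simp [DRmap, comul1, smap, ← (ℛ k a).eq, ← (ℛ k h).eq, tmul_sum, sum_tmul,
    tensorTensorTensorComm_tmul, smul_tmul', Finset.smul_sum]

def interchangeMap (u v : A ⊗[k] H) :
    (A ⊗[k] H) ⊗[k] (H ⊗[k] (A ⊗[k] H)) →ₗ[k] A ⊗[k] H :=
  circ k A H ∘ₗ map (rmul k A H act u ∘ₗ projA.rTensor H) (rmul k A H act v)
    ∘ₗ (TensorProduct.assoc k (A ⊗[k] H) H (A ⊗[k] H)).symm.toLinearMap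

lemma interchangeMap_tmul (u v : A ⊗[k] H) (a : A) (h κ : H) (w : A ⊗[k] H) :
    interchangeMap act u v ((a ⊗ₜ h) ⊗ₜ (κ ⊗ₜ w))
      = counit (R := k) h • circ k A H (smashMul k A H act ((a ⊗ₜ κ) ⊗ₜ u)
          ⊗ₜ smashMul k A H act (w ⊗ₜ v)) := by
  simp [interchangeMap, rmul, ← smul_tmul']

lemma interchangeMap_assoc_DRmap (u v : A ⊗[k] H) (z : (A ⊗[k] H) ⊗[k] (A ⊗[k] H)) :
    interchangeMap act u v (TensorProduct.assoc k (A ⊗[k] H) H (A ⊗[k] H)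
        (map (DRmap k A H) LinearMap.id z))
      = circ k A H (map (rmul k A H act u) (rmul k A H act v) z) := by
  rw [interchangeMap, LinearMap.comp_apply, LinearMap.comp_apply, LinearEquiv.coe_coe,
    LinearEquiv.symm_apply_apply, ← LinearMap.comp_apply (map _ _), ← map_comp,
    LinearMap.comp_assoc, projA_rTensor_comp_DRmap, LinearMap.comp_id, LinearMap.comp_id]

lemma DLmap_tmul (d : A →ₗ[k] H) (b : A) (g : H) {ι κ : Type*} (𝓡b : Repr k b ι)
    (𝓡g : Repr k g κ) :
    DLmap k A H d (b ⊗ₜ g) = ∑ i ∈ 𝓡b.index, ∑ j ∈ 𝓡g.index,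
      (d (𝓡b.left i) * 𝓡g.left j) ⊗ₜ (𝓡b.right i ⊗ₜ 𝓡g.right j) := by
  simp [DLmap, comul1, tmap, ← 𝓡b.eq, ← 𝓡g.eq, tmul_sum, sum_tmul, tensorTensorTensorComm_tmul,
    Finset.sum_comm (s := 𝓡g.index)]

lemma smashMul_rTensor_mulLeft (c : A) (p w : A ⊗[k] H) :
    smashMul k A H act ((LinearMap.mulLeft k c).rTensor H p ⊗ₜ w)
      = (LinearMap.mulLeft k c).rTensor H (smashMul k A H act (p ⊗ₜ w)) := by
  induction p using TensorProduct.induction_on with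
  | zero => simp
  | add p p' hp hp' => simp only [map_add, add_tmul, hp, hp']
  | tmul a h =>
    induction w using TensorProduct.induction_on with
    | zero => simp
    | add w w' hw hw' => simp only [map_add, tmul_add, hw, hw']
    | tmul b g => simp [smashMul_tmul_tmul act _ b g (ℛ k h), mul_assoc]

namespace HopfCrossedModule

variable {act} {d : A →ₗ[k] H}

lemma act_tmul_mul (hcm : HopfCrossedModule k A H act d) {h : H} {ι : Type*} (𝓡 : Repr k h ι)
    (a b : A) :
    act (h ⊗ₜ (a * b)) = ∑ i ∈ 𝓡.index, act (𝓡.left i ⊗ₜ a) * act (𝓡.right i ⊗ₜ b) := by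
  simpa [← 𝓡.eq, sum_tmul, tensorTensorTensorComm_tmul] using
    LinearMap.congr_fun hcm.act_mul_alg (h ⊗ₜ (a ⊗ₜ b))

lemma act_d_tmul (hcm : HopfCrossedModule k A H act d) {a : A} {ι : Type*} (𝓡 : Repr k a ι)
    (b : A) :
    act (d a ⊗ₜ b) = ∑ i ∈ 𝓡.index, 𝓡.left i * (b * HopfAlgebra.antipode k (𝓡.right i)) := by
  simpa [← 𝓡.eq, sum_tmul] using LinearMap.congr_fun hcm.crossed (a ⊗ₜ b)

lemma sum_act_d_mul_eq_mul (hcm : HopfCrossedModule k A H act d) {b : A} {ι : Type*}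
    (𝓡 : Repr k b ι) (z : A) :
    ∑ i ∈ 𝓡.index, act (d (𝓡.left i) ⊗ₜ z) * 𝓡.right i = b * z := by
  -- `T (x ⊗ y ⊗ w) = x * (z * S y * w)`
  let T : A ⊗[k] (A ⊗[k] A) →ₗ[k] A := LinearMap.mul' k A ∘ₗ
    LinearMap.lTensor A (LinearMap.mul' k A ∘ₗ
      (LinearMap.mulLeft k z ∘ₗ (HopfAlgebra.antipode k : A →ₗ[k] A)).rTensor A)
  have coassoc := congr(T $(sum_tmul_tmul_eq 𝓡 (fun i => ℛ k (𝓡.left i))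
    (fun i => ℛ k (𝓡.right i))))
  simp only [map_sum, T, LinearMap.comp_apply, LinearMap.lTensor_tmul, LinearMap.rTensor_tmul,
    LinearMap.mul'_apply, LinearMap.mulLeft_apply] at coassoc
  calc ∑ i ∈ 𝓡.index, act (d (𝓡.left i) ⊗ₜ z) * 𝓡.right i
      = ∑ i ∈ 𝓡.index, 𝓡.left i * (z * ∑ j ∈ (ℛ k (𝓡.right i)).index,
          HopfAlgebra.antipode k ((ℛ k (𝓡.right i)).left j) * (ℛ k (𝓡.right i)).right j) := by
        simp only [hcm.act_d_tmul (ℛ k _), Finset.sum_mul, Finset.mul_sum, mul_assoc] at coassoc ⊢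
        exact coassoc
    _ = ∑ i ∈ 𝓡.index, counit (R := k) (𝓡.right i) • (𝓡.left i * z) := by
        simp only [HopfAlgebra.sum_antipode_mul_eq_smul, mul_smul_comm, mul_one]
    _ = b * z := by
        simpa using congr(LinearMap.mulRight k z $(sum_counit_right_smul 𝓡))

lemma smashMul_tmul_one (hcm : HopfCrossedModule k A H act d) (c : A) (w : A ⊗[k] H) :
    smashMul k A H act ((c ⊗ₜ 1) ⊗ₜ w) = (LinearMap.mulLeft k c).rTensor H w := by
  induction w using TensorProduct.induction_on with
  | zero => simp
  | add w w' hw hw' => simp only [map_add, tmul_add, hw, hw']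
  | tmul b g => simp [smashMul, Algebra.TensorProduct.one_def, hcm.act_one]

lemma sum_act_d_mul_tmul_eq_smashMul (hcm : HopfCrossedModule k A H act d) {b : A} {g : H}
    {ι κ : Type*} (𝓡b : Repr k b ι) (𝓡g : Repr k g κ) (z : A) :
    ∑ i ∈ 𝓡b.index, ∑ j ∈ 𝓡g.index,
        (act ((d (𝓡b.left i) * 𝓡g.left j) ⊗ₜ z) * 𝓡b.right i) ⊗ₜ 𝓡g.right j
      = smashMul k A H act ((b ⊗ₜ g) ⊗ₜ (z ⊗ₜ 1)) := by
  rw [smashMul_tmul_tmul act b z 1 𝓡g, Finset.sum_comm]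
  refine Finset.sum_congr rfl fun j _ => ?_
  simp only [hcm.act_mul, ← sum_tmul, hcm.sum_act_d_mul_eq_mul, mul_one]

lemma smashMul_assoc_tmul_one (hcm : HopfCrossedModule k A H act d) (z : A)
    (p w : A ⊗[k] H) :
    smashMul k A H act (smashMul k A H act (p ⊗ₜ (z ⊗ₜ 1)) ⊗ₜ w)
      = smashMul k A H act (p ⊗ₜ smashMul k A H act ((z ⊗ₜ 1) ⊗ₜ w)) := by
  induction p using TensorProduct.induction_on with
  | zero => simp
  | add p p' hp hp' => simp only [map_add, add_tmul, hp, hp']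
  | tmul b g =>
    induction w using TensorProduct.induction_on with
    | zero => simp
    | add w w' hw hw' => simp only [map_add, tmul_add, hw, hw']
    | tmul e m =>
      let 𝓡 := ℛ k g
      -- `T (x ⊗ y ⊗ w) = b (x ▷ z) (y ▷ e) ⊗ w m`
      let T : H ⊗[k] (H ⊗[k] H) →ₗ[k] A ⊗[k] H :=
        map (LinearMap.mul' k A) (LinearMap.mulRight k m)
          ∘ₗ (TensorProduct.assoc k A A H).symm.toLinearMap
          ∘ₗ map (LinearMap.mulLeft k b ∘ₗ act ∘ₗ (TensorProduct.mk k H A).flip z)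
            ((act ∘ₗ (TensorProduct.mk k H A).flip e).rTensor H)
      have coassoc := congr(T $(sum_tmul_tmul_eq 𝓡 (fun j => ℛ k (𝓡.left j))
        (fun j => ℛ k (𝓡.right j))))
      simp only [map_sum, T, LinearMap.comp_apply, map_tmul, LinearMap.rTensor_tmul,
        LinearEquiv.coe_coe, TensorProduct.assoc_symm_tmul, LinearMap.mul'_apply,
        LinearMap.mulLeft_apply, LinearMap.mulRight_apply, LinearMap.flip_apply,
        TensorProduct.mk_apply] at coassoc
      rw [hcm.smashMul_tmul_one, LinearMap.rTensor_tmul, LinearMap.mulLeft_apply,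
        smashMul_tmul_tmul act b z 1 𝓡, smashMul_tmul_tmul act b (z * e) m 𝓡]
      simp only [mul_one, map_sum, sum_tmul, smashMul_tmul_tmul act _ e m (ℛ k (𝓡.right _)),
        hcm.act_tmul_mul (ℛ k (𝓡.left _)), Finset.mul_sum, mul_assoc] at coassoc ⊢
      exact coassoc.symm

lemma interchangeMap_DLmap (hcm : HopfCrossedModule k A H act d)
    (u v : A ⊗[k] H) (y : (A ⊗[k] H) ⊗[k] (A ⊗[k] H)) :
    interchangeMap act u v (map LinearMap.id (DLmap k A H d) y)
      = smashMul k A H act (circ k A H y ⊗ₜ circ k A H (u ⊗ₜ v)) := by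
  suffices interchangeMap act u v ∘ₗ map LinearMap.id (DLmap k A H d)
      = smashMul k A H act ∘ₗ (TensorProduct.mk k _ _).flip (circ k A H (u ⊗ₜ v)) ∘ₗ circ k A H
    from LinearMap.congr_fun this y
  refine TensorProduct.ext_fourfold' fun a h b g => ?_
  set z := projA u
  let 𝓡b := ℛ k b
  let 𝓡g := ℛ k g
  calc interchangeMap act u v ((a ⊗ₜ h) ⊗ₜ DLmap k A H d (b ⊗ₜ g))
      = counit (R := k) h • smashMul k A H act ((LinearMap.mulLeft k a).rTensor H
          (∑ i ∈ 𝓡b.index, ∑ j ∈ 𝓡g.index,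
            (act ((d (𝓡b.left i) * 𝓡g.left j) ⊗ₜ z) * 𝓡b.right i) ⊗ₜ 𝓡g.right j) ⊗ₜ v) := by
        simp only [DLmap_tmul d b g 𝓡b 𝓡g, tmul_sum, map_sum, interchangeMap_tmul, circ_tmul,
          projA_smashMul_tmul, ← smashMul_rTensor_mulLeft, LinearMap.rTensor_tmul,
          LinearMap.mulLeft_apply, sum_tmul, Finset.smul_sum, mul_assoc, z]
    _ = counit (R := k) h • smashMul k A H act
          (smashMul k A H act (((a * b) ⊗ₜ g) ⊗ₜ (z ⊗ₜ 1)) ⊗ₜ v) := by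
        rw [hcm.sum_act_d_mul_tmul_eq_smashMul, ← smashMul_rTensor_mulLeft, LinearMap.rTensor_tmul,
          LinearMap.mulLeft_apply]
    _ = counit (R := k) h • smashMul k A H act
          (((a * b) ⊗ₜ g) ⊗ₜ (LinearMap.mulLeft k z).rTensor H v) := by
        rw [hcm.smashMul_assoc_tmul_one, hcm.smashMul_tmul_one]
    _ = _ := by
        simp [circ_tmul, z, ← smul_tmul']

end HopfCrossedModule

end

/-- Theorem 2.6 (part): the quantum interchange law: for `Σᵢ xᵢ⊗yᵢ ∈ H1□H1` and
`u, v ∈ H1`, `Σᵢ (xᵢu)∘(yᵢv) = Σᵢ (xᵢ∘yᵢ)(u∘v)`. -/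
theorem statement9 (act : H ⊗[k] A →ₗ[k] A) (d : A →ₗ[k] H)
    (hcm : HopfCrossedModule k A H act d) :
    ∀ x ∈ cot k A H d, ∀ u v : A ⊗[k] H,
      circ k A H (map (rmul k A H act u) (rmul k A H act v) x)
        = smashMul k A H act (circ k A H x ⊗ₜ[k] circ k A H (u ⊗ₜ[k] v)) := by
  intro x hx u v
  rw [← interchangeMap_assoc_DRmap]
  exact (congrArg _ hx).trans (hcm.interchangeMap_DLmap u v x)

end
end

section
/- Assume the antipode of A is bijective. Then τ ∘ (𝒮⊗𝒮) ∘ Δ = Δ ∘ 𝒮 as maps H1 → H1⊗H1 (where τ is the flip map on H1⊗H1) if and only if both of the following hold: a_(1) ⊗ d(a_(2)) = a_(2) ⊗ d(a_(1)) in A⊗H for all a ∈ A, and H is cocommutative (τ ∘ Δ_H = Δ_H). (Proposition 2.7(iii).) -/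
open TensorProduct

noncomputable section

variable (k A H : Type*) [Field k] [Ring A] [Ring H]
  [HopfAlgebra k A] [HopfAlgebra k H]

/-!
Write `Ξₗ(a) = τ(𝒮(a₁ ⊗ 1) ⊗ 𝒮(a₂ ⊗ 1))` and `Ξᵣ(a) = Δ(𝒮(a ⊗ 1))`. Since
`𝒮(a ⊗ h) = 𝒮(a ⊗ 1)(1 ⊗ h)` and the coproduct of `A ⊗ H` is multiplicative, the two sides of
the identity send `a ⊗ h` to `Ξₗ(a) · ((1 ⊗ h₂) ⊗ (1 ⊗ h₁))` and `Ξᵣ(a) · ((1 ⊗ h₁) ⊗ (1 ⊗ h₂))`;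
taking `a = 1` or `h = 1` shows that the identity amounts to cocommutativity of `H` together with
`Ξₗ = Ξᵣ`. As the antipode is anti-comultiplicative and `d` is comultiplicative,
`Ξₗ(a) = (S a₃ ⊗ d a₄) ⊗ (S a₁ ⊗ d a₂)` and `Ξᵣ(a) = (S a₂ ⊗ d a₃) ⊗ (S a₁ ⊗ d a₄)`, which agree
once `a₁ ⊗ d a₂ = a₂ ⊗ d a₁`. Conversely, applying the counits of `H` and `A` to the second leg of
the first factor and to the first leg of the second factor turns `Ξₗ = Ξᵣ` into
`S a₂ ⊗ d a₁ = S a₁ ⊗ d a₂`, from which `S` cancels because it is injective and `k` is a field.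
-/

open LinearMap Coalgebra HopfAlgebra

namespace HopfAlgebra

open WithConv

variable {R C : Type*} [CommSemiring R] [Semiring C] [HopfAlgebra R C]

theorem comul_comp_antipode :
    comul ∘ₗ antipode R = map (antipode R) (antipode R) ∘ₗ
      (TensorProduct.comm R C C).toLinearMap ∘ₗ (comul : C →ₗ[R] C ⊗[R] C) := by
  -- `(S ⊗ S) ∘ τ ∘ Δ` and `Δ ∘ S` are a left and a right convolution inverse of `Δ`.
  let ι₁ := (Algebra.TensorProduct.includeLeft : C →ₐ[R] C ⊗[R] C).toLinearMap
  let ι₂ := (Algebra.TensorProduct.includeRight : C →ₐ[R] C ⊗[R] C).toLinearMap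
  have comul_eq : toConv comul = toConv ι₁ * toConv ι₂ := by
    ext c
    simp [ι₁, ι₂, (ℛ R c).convMul_apply, ← (ℛ R c).eq]
  have flip_eq : toConv (map (antipode R) (antipode R) ∘ₗ
      (TensorProduct.comm R C C).toLinearMap ∘ₗ comul) =
      toConv (ι₂ ∘ₗ antipode R) * toConv (ι₁ ∘ₗ antipode R) := by
    ext c
    simp [ι₁, ι₂, (ℛ R c).convMul_apply, ← (ℛ R c).eq]
  have cancel (φ : C →ₐ[R] C ⊗[R] C) :
      toConv (φ.toLinearMap ∘ₗ antipode R) * toConv φ.toLinearMap = 1 := by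
    have h := algHom_comp_convMul_distrib φ (toConv (antipode R)) (toConv .id)
    rw [antipode_mul_id, comp_id] at h
    rw [← toConv_ofConv (_ * _), ← h]
    ext c
    simp
  have left_inv : toConv (map (antipode R) (antipode R) ∘ₗ
      (TensorProduct.comm R C C).toLinearMap ∘ₗ comul) * toConv comul = 1 := by
    rw [flip_eq, comul_eq, ← mul_assoc, mul_assoc _ _ (toConv ι₁), cancel, mul_one, cancel]
  exact congr(ofConv $(left_inv_eq_right_inv left_inv comul_right_inv)).symm

end HopfAlgebra

theorem map_comp_comul_eq_comm_comp_map_comp_comul {R C M X : Type*} [CommSemiring R]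
    [AddCommMonoid C] [Module R C] [Coalgebra R C] [AddCommMonoid M] [Module R M]
    [AddCommMonoid X] [Module R X] {d : C →ₗ[R] M}
    (hd : map id d ∘ₗ comul = map id d ∘ₗ (TensorProduct.comm R C C).toLinearMap ∘ₗ comul)
    (F : C →ₗ[R] X) :
    map F d ∘ₗ comul = (TensorProduct.comm R M X).toLinearMap ∘ₗ map d F ∘ₗ comul := by
  have h : map F d = rTensor M F ∘ₗ map id d := by rw [rTensor, ← map_comp, comp_id, id_comp]
  rw [h, comp_assoc, hd, ← comp_assoc, ← h, ← comp_assoc, ← comp_assoc]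
  congr 1
  ext x y
  simp

section SmashProduct

variable {k A H}
variable (d : A →ₗ[k] H)

def SSA : A →ₗ[k] A ⊗[k] H := map (antipode k) d ∘ₗ comul

theorem SS_tmul (a : A) (h : H) : SS k A H d (a ⊗ₜ h) = SSA d a * (1 ⊗ₜ h) := by
  simp only [SS, SSA, comp_apply, LinearEquiv.coe_coe, map_tmul, id_coe, id_eq]
  rw [← (ℛ k a).eq]
  simp [tmap, sum_tmul, map_sum, Finset.sum_mul]

theorem comul1_eq_comul : comul1 k A H = comul := by
  ext x u
  simp [comul1, AlgebraTensorModule.tensorTensorTensorComm_eq]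

theorem comul1_one_tmul (h : H) :
    comul1 k A H (1 ⊗ₜ h) = map (imap k A H) (imap k A H) (comul h) := by
  simp only [comul1, comp_apply, LinearEquiv.coe_coe, map_tmul, Bialgebra.comul_one]
  rw [← (ℛ k h).eq]
  simp [imap, map_sum, tmul_sum, Algebra.TensorProduct.one_def]

theorem comul1_SS_tmul (a : A) (h : H) :
    comul1 k A H (SS k A H d (a ⊗ₜ h)) =
      comul1 k A H (SSA d a) * map (imap k A H) (imap k A H) (comul h) := by
  rw [SS_tmul, comul1_eq_comul, Bialgebra.comul_mul, ← comul1_eq_comul, comul1_one_tmul]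

theorem comm_map_SS_comul1_tmul (a : A) (h : H) :
    TensorProduct.comm k _ _ (map (SS k A H d) (SS k A H d) (comul1 k A H (a ⊗ₜ h))) =
      TensorProduct.comm k _ _ (map (SSA d) (SSA d) (comul a)) *
        map (imap k A H) (imap k A H) (TensorProduct.comm k H H (comul h)) := by
  simp only [comul1, comp_apply, LinearEquiv.coe_coe, map_tmul]
  rw [← (ℛ k a).eq, ← (ℛ k h).eq]
  simp [SS_tmul, imap, map_sum, sum_tmul, tmul_sum, Finset.sum_mul_sum]
  exact Finset.sum_comm

variable {d} in
theorem comul1_comp_SSA (hd : comul ∘ₗ d = map d d ∘ₗ comul) :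
    comul1 k A H ∘ₗ SSA d =
      (TensorProduct.assoc k (A ⊗[k] H) A H).toLinearMap ∘ₗ
        rTensor H (TensorProduct.comm k A (A ⊗[k] H)).toLinearMap ∘ₗ
        (TensorProduct.assoc k A (A ⊗[k] H) H).symm.toLinearMap ∘ₗ
        map (antipode k) (map (SSA d) d ∘ₗ comul) ∘ₗ comul := by
  have : comul1 k A H ∘ₗ SSA d = (tensorTensorTensorComm k A A H H).toLinearMap ∘ₗ
      map (map (antipode k) (antipode k) ∘ₗ (TensorProduct.comm k A A).toLinearMap ∘ₗ comul)
        (map d d ∘ₗ comul) ∘ₗ comul := by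
    simp only [comul1, SSA, comp_assoc]
    rw [← comp_assoc (comul : A →ₗ[k] A ⊗[k] A) (map (antipode k) d), ← map_comp,
      comul_comp_antipode, hd]
  rw [this, SSA]
  simp only [coassoc_simps]

theorem comm_comp_map_SSA_comp_comul :
    (TensorProduct.comm k (A ⊗[k] H) (A ⊗[k] H)).toLinearMap ∘ₗ map (SSA d) (SSA d) ∘ₗ comul =
      (TensorProduct.comm k (A ⊗[k] H) (A ⊗[k] H)).toLinearMap ∘ₗ
        (TensorProduct.assoc k A H (A ⊗[k] H)).symm.toLinearMap ∘ₗ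
        map (antipode k) (map d (SSA d) ∘ₗ comul) ∘ₗ comul := by
  simp only [SSA, coassoc_simps]

variable {d} in
theorem comm_comp_map_SSA_comp_comul_eq_of_flip (hd : comul ∘ₗ d = map d d ∘ₗ comul)
    (hA : map id d ∘ₗ comul = map id d ∘ₗ (TensorProduct.comm k A A).toLinearMap ∘ₗ comul) :
    (TensorProduct.comm k (A ⊗[k] H) (A ⊗[k] H)).toLinearMap ∘ₗ map (SSA d) (SSA d) ∘ₗ comul =
      comul1 k A H ∘ₗ SSA d := by
  have plumbing : (TensorProduct.assoc k (A ⊗[k] H) A H).toLinearMap ∘ₗ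
        rTensor H (TensorProduct.comm k A (A ⊗[k] H)).toLinearMap ∘ₗ
        (TensorProduct.assoc k A (A ⊗[k] H) H).symm.toLinearMap ∘ₗ
        lTensor A (TensorProduct.comm k H (A ⊗[k] H)).toLinearMap =
      (TensorProduct.comm k (A ⊗[k] H) (A ⊗[k] H)).toLinearMap ∘ₗ
        (TensorProduct.assoc k A H (A ⊗[k] H)).symm.toLinearMap := by
    ext
    simp
  rw [comm_comp_map_SSA_comp_comul, comul1_comp_SSA hd,
    map_comp_comul_eq_comm_comp_map_comp_comul hA,
    ← lTensor_comp_map (g' := (TensorProduct.comm k H (A ⊗[k] H)).toLinearMap) (f := antipode k)]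
  simp only [← comp_assoc] at plumbing ⊢
  rw [plumbing]

theorem rid_lTensor_counit_SSA (hd : counit ∘ₗ d = counit) (a : A) :
    TensorProduct.rid k A (lTensor A counit (SSA d a)) = antipode k a := by
  rw [SSA, comp_apply, lTensor_map, hd, ← rTensor_comp_lTensor, comp_apply,
    lTensor_counit_comul, rTensor_tmul, rid_tmul, one_smul]

theorem smap_SSA (a : A) : smap k A H (SSA d a) = d a := by
  rw [smap, SSA, comp_apply, comp_apply, map_map, counit_comp_antipode, id_comp,
    ← lTensor_comp_rTensor, comp_apply, rTensor_counit_comul, lTensor_tmul, LinearEquiv.coe_coe,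
    lid_tmul, one_smul]

theorem map_rid_smap_comp_comul1 :
    map ((TensorProduct.rid k A).toLinearMap ∘ₗ lTensor A counit) (smap k A H) ∘ₗ comul1 k A H =
      LinearMap.id := by
  have h : map ((TensorProduct.rid k A).toLinearMap ∘ₗ lTensor A counit) (smap k A H) ∘ₗ
      (tensorTensorTensorComm k A A H H).toLinearMap =
      map ((TensorProduct.rid k A).toLinearMap ∘ₗ lTensor A counit)
        ((TensorProduct.lid k H).toLinearMap ∘ₗ rTensor H counit) := by
    ext
    simp [smap]
    rw [smul_tmul', smul_tmul', smul_comm]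
  rw [comul1, ← comp_assoc, h]
  ext x u
  simp [lTensor_counit_comul, rTensor_counit_comul]

variable {d} in
theorem flip_of_comm_comp_map_SSA_comp_comul_eq (hd : counit ∘ₗ d = (counit : A →ₗ[k] k))
    (hS : Function.Injective (antipode k : A →ₗ[k] A))
    (h : (TensorProduct.comm k (A ⊗[k] H) (A ⊗[k] H)).toLinearMap ∘ₗ
        map (SSA d) (SSA d) ∘ₗ comul = comul1 k A H ∘ₗ SSA d) :
    map id d ∘ₗ comul = map id d ∘ₗ (TensorProduct.comm k A A).toLinearMap ∘ₗ comul := by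
  let Ω := map ((TensorProduct.rid k A).toLinearMap ∘ₗ lTensor A (counit : H →ₗ[k] k))
    (smap k A H)
  have hΩ (x : A ⊗[k] A) : Ω (TensorProduct.comm k _ _ (map (SSA d) (SSA d) x)) =
      map (antipode k) d (TensorProduct.comm k A A x) := by
    induction x using TensorProduct.induction_on with
    | zero => simp
    | tmul x y => simp [Ω, rid_lTensor_counit_SSA d hd, smap_SSA]
    | add x y hx hy => simp only [map_add, hx, hy]
  have hSd (a : A) : map (antipode k) d (TensorProduct.comm k A A (comul a)) =
      map (antipode k) d (comul a) := by
    calc map (antipode k) d (TensorProduct.comm k A A (comul a))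
        = Ω (TensorProduct.comm k _ _ (map (SSA d) (SSA d) (comul a))) := (hΩ _).symm
      _ = Ω (comul1 k A H (SSA d a)) := congr(Ω ($h a))
      _ = SSA d a := congr($(map_rid_smap_comp_comul1 (A := A) (H := H)) (SSA d a))
  refine LinearMap.ext fun a => Module.Flat.rTensor_preserves_injective_linearMap _ hS ?_
  simpa [rTensor_map] using (hSd a).symm

theorem map_imap_injective : Function.Injective (map (imap k A H) (imap k A H)) := by
  have : map (smap k A H) (smap k A H) ∘ₗ map (imap k A H) (imap k A H) = LinearMap.id := by
    ext
    simp [smap, imap]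
  exact Function.LeftInverse.injective (LinearMap.congr_fun this)

theorem map_imap_comul_one : map (imap k A H) (imap k A H) (comul 1) = 1 := by
  simp [imap, Algebra.TensorProduct.one_def]

theorem map_imap_comm_comul_one :
    map (imap k A H) (imap k A H) (TensorProduct.comm k H H (comul 1)) = 1 := by
  simp [imap, Algebra.TensorProduct.one_def]

variable {d} in
theorem SSA_one (hd : d 1 = 1) : SSA d 1 = 1 := by
  simp [SSA, Algebra.TensorProduct.one_def, hd]

variable {d} in
theorem comm_map_SSA_comul_one (hd : d 1 = 1) :
    TensorProduct.comm k _ _ (map (SSA d) (SSA d) (comul 1)) = 1 := by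
  simp [SSA_one hd, Algebra.TensorProduct.one_def]

variable {d} in
theorem comul1_SSA_one (hd : d 1 = 1) : comul1 k A H (SSA d 1) = 1 := by
  rw [SSA_one hd, comul1_eq_comul, Bialgebra.comul_one]

end SmashProduct

/-- Proposition 2.7(iii): assuming the antipode of `A` is bijective,
`τ∘(𝒮⊗𝒮)∘Δ = Δ∘𝒮` iff `a₁ ⊗ d(a₂) = a₂ ⊗ d(a₁)` for all `a ∈ A` and `H` is
cocommutative. -/
theorem statement12 (act : H ⊗[k] A →ₗ[k] A) (d : A →ₗ[k] H)
    (hcm : HopfCrossedModule k A H act d)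
    (hbij : Function.Bijective (HopfAlgebra.antipode (R := k) : A →ₗ[k] A)) :
    (TensorProduct.comm k (A ⊗[k] H) (A ⊗[k] H)).toLinearMap
          ∘ₗ map (SS k A H d) (SS k A H d) ∘ₗ comul1 k A H
        = comul1 k A H ∘ₗ SS k A H d
      ↔ (map LinearMap.id d ∘ₗ (Coalgebra.comul : A →ₗ[k] A ⊗[k] A)
            = map LinearMap.id d ∘ₗ (TensorProduct.comm k A A).toLinearMap
                ∘ₗ (Coalgebra.comul : A →ₗ[k] A ⊗[k] A)
          ∧ (TensorProduct.comm k H H).toLinearMap ∘ₗ (Coalgebra.comul : H →ₗ[k] H ⊗[k] H)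
              = (Coalgebra.comul : H →ₗ[k] H ⊗[k] H)) := by
  constructor
  · intro hE
    have hE_tmul (a : A) (h : H) :
        TensorProduct.comm k _ _ (map (SSA d) (SSA d) (comul a)) *
            map (imap k A H) (imap k A H) (TensorProduct.comm k H H (comul h)) =
          comul1 k A H (SSA d a) * map (imap k A H) (imap k A H) (comul h) := by
      rw [← comm_map_SS_comul1_tmul, ← comul1_SS_tmul]
      exact congr($hE (a ⊗ₜ h))
    refine ⟨flip_of_comm_comp_map_SSA_comp_comul_eq hcm.d_counit hbij.injective
      (LinearMap.ext fun a => ?_), LinearMap.ext fun h => map_imap_injective (A := A) ?_⟩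
    · have := hE_tmul a 1
      rw [map_imap_comul_one, map_imap_comm_comul_one, mul_one, mul_one] at this
      exact this
    · have := hE_tmul 1 h
      rw [comm_map_SSA_comul_one hcm.d_one, comul1_SSA_one hcm.d_one, one_mul, one_mul] at this
      exact this
  · rintro ⟨hA, hH⟩
    have hΞ (a : A) : TensorProduct.comm k _ _ (map (SSA d) (SSA d) (comul a)) =
        comul1 k A H (SSA d a) :=
      congr($(comm_comp_map_SSA_comp_comul_eq_of_flip hcm.d_comul hA) a)
    have hH' (h : H) : TensorProduct.comm k H H (comul h) = comul h := congr($hH h)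
    refine TensorProduct.ext' fun a h => ?_
    simp only [comp_apply, LinearEquiv.coe_coe]
    rw [comm_map_SS_comul1_tmul, comul1_SS_tmul, hH', hΞ]

end
end
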